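/- arXiv:2006.03414 — 5 statements merged into one kernel-verified Lean document; each statement's English description precedes it below -/
import Mathlib

section
/- Let α, β ∈ ℂ with |α|² + |β|² = 1. Define A₁ = α|e₁⟩⟨e₁| + |e₂⟩⟨e₃|, A₂ = β|e₁⟩⟨e₃| + |e₃⟩⟨e₂|, A₃ = −|e₁⟩⟨e₂| − conj(β)|e₃⟩⟨e₁|, A₄ = |e₂⟩⟨e₁| + conj(α)|e₃⟩⟨e₃| in M₃(ℂ), and Φ_{α,β}(ρ) = (1/2) ∑_{k=1}^4 A_k* ρ A_k. Then Φ_{α,β} has an exact factorization through M₃(ℂ) ⊗ M₂(ℂ): there exists a unitary U ∈ M₃(ℂ) ⊗ M₂(ℂ) such that for all ρ ∈ M₃(ℂ), Φ_{α,β}(ρ) = (I ⊗ Tr)(U*(ρ ⊗ (1/2)I₂)U). (Explicitly, U may be taken as the block matrix with blocks A₁, A₂ in the first row and A₃, A₄ in the second row, i.e. U = ∑_{j,k∈{1,2}} A_{2(j−1)+k} ⊗ |e_j⟩⟨e_k|.) -/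
/-!
Take for `U` the `2 × 2` block matrix `B = (A₁, A₂; A₃, A₄)`. Then `U*(ρ ⊗ I/2)U` is the
block matrix `(1/2) ∑ₘ (Bₘₖ)* ρ Bₘₗ`, so tracing out the second factor gives
`(1/2) ∑ₖ Aₖ* ρ Aₖ = Φ(ρ)`. Unitarity of `U` amounts to orthonormality of its block columns,
`∑ₘ (Bₘₖ)* Bₘₗ = δₖₗ I`, which for these blocks is exactly `|α|² + |β|² = 1`.
-/

open Matrix
open scoped Kronecker

noncomputable section

/-- A map `Φ` on `M_d(ℂ)` has an exact factorization through `M_d(ℂ) ⊗ M_ν(ℂ)` if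
there is a unitary `U ∈ M_d(ℂ) ⊗ M_ν(ℂ)` with
`Φ(ρ) = (I ⊗ Tr)(U*(ρ ⊗ (1/ν)I_ν)U)` for all `ρ`, entrywise. -/
def HasExactFactorization (d ν : ℕ)
    (Φ : Matrix (Fin d) (Fin d) ℂ → Matrix (Fin d) (Fin d) ℂ) : Prop :=
  ∃ U : Matrix (Fin d × Fin ν) (Fin d × Fin ν) ℂ,
    U ∈ Matrix.unitaryGroup (Fin d × Fin ν) ℂ ∧
    ∀ ρ : Matrix (Fin d) (Fin d) ℂ, ∀ i j : Fin d,
      Φ ρ i j =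
        ∑ k : Fin ν,
          (Uᴴ * (ρ ⊗ₖ (((1 : ℂ) / ν) • (1 : Matrix (Fin ν) (Fin ν) ℂ))) * U) (i, k) (j, k)

/-- `A₁ = α|e₁⟩⟨e₁| + |e₂⟩⟨e₃|`. -/
def A₁ (α : ℂ) : Matrix (Fin 3) (Fin 3) ℂ := !![α, 0, 0; 0, 0, 1; 0, 0, 0]

/-- `A₂ = β|e₁⟩⟨e₃| + |e₃⟩⟨e₂|`. -/
def A₂ (β : ℂ) : Matrix (Fin 3) (Fin 3) ℂ := !![0, 0, β; 0, 0, 0; 0, 1, 0]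

/-- `A₃ = −|e₁⟩⟨e₂| − conj(β)|e₃⟩⟨e₁|`. -/
def A₃ (β : ℂ) : Matrix (Fin 3) (Fin 3) ℂ :=
  !![0, -1, 0; 0, 0, 0; -(starRingEnd ℂ β), 0, 0]

/-- `A₄ = |e₂⟩⟨e₁| + conj(α)|e₃⟩⟨e₃|`. -/
def A₄ (α : ℂ) : Matrix (Fin 3) (Fin 3) ℂ :=
  !![0, 0, 0; 1, 0, 0; 0, 0, starRingEnd ℂ α]

/-- `Φ_{α,β}(ρ) = (1/2) ∑_{k=1}^4 A_k* ρ A_k`. -/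
def Phi (α β : ℂ) (ρ : Matrix (Fin 3) (Fin 3) ℂ) : Matrix (Fin 3) (Fin 3) ℂ :=
  ((1 : ℂ) / 2) • ((A₁ α)ᴴ * ρ * A₁ α + (A₂ β)ᴴ * ρ * A₂ β + (A₃ β)ᴴ * ρ * A₃ β +
    (A₄ α)ᴴ * ρ * A₄ α)

section BlockOperator

variable {n k R : Type*}

/-- `∑ₖₗ Bₖₗ ⊗ |k⟩⟨l|`; the block index is the second coordinate, as in `ρ ⊗ₖ I`. -/
def blockOperator (B : Matrix k k (Matrix n n R)) : Matrix (n × k) (n × k) R :=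
  Matrix.of fun p q => B p.2 q.2 p.1 q.1

@[simp]
theorem blockOperator_apply (B : Matrix k k (Matrix n n R)) (p q : n × k) :
    blockOperator B p q = B p.2 q.2 p.1 q.1 := rfl

theorem blockOperator_mul [Fintype n] [Fintype k] [NonUnitalNonAssocSemiring R]
    (B C : Matrix k k (Matrix n n R)) :
    blockOperator B * blockOperator C = blockOperator (B * C) := by
  ext ⟨i, a⟩ ⟨j, b⟩
  simp only [blockOperator_apply, mul_apply, Fintype.sum_prod_type, Matrix.sum_apply]
  exact Finset.sum_comm

theorem conjTranspose_blockOperator [Star R] (B : Matrix k k (Matrix n n R)) :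
    (blockOperator B)ᴴ = blockOperator Bᴴ := by
  ext ⟨i, a⟩ ⟨j, b⟩
  simp

theorem blockOperator_one [DecidableEq n] [DecidableEq k] [Zero R] [One R] :
    blockOperator (1 : Matrix k k (Matrix n n R)) = 1 := by
  ext ⟨i, a⟩ ⟨j, b⟩
  by_cases hab : a = b <;> by_cases hij : i = j <;> simp [one_apply, hab, hij]

theorem kronecker_smul_one_eq_blockOperator [DecidableEq k] [CommSemiring R]
    (ρ : Matrix n n R) (c : R) :
    ρ ⊗ₖ (c • (1 : Matrix k k R)) = blockOperator (diagonal fun _ => c • ρ) := by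
  ext ⟨i, a⟩ ⟨j, b⟩
  by_cases hab : a = b <;> simp [one_apply, hab, mul_comm]

theorem sum_blockOperator_apply_diag [Fintype k] [AddCommMonoid R]
    (M : Matrix k k (Matrix n n R)) (i j : n) :
    ∑ a, blockOperator M (i, a) (j, a) = M.trace i j := by
  simp [trace, Matrix.sum_apply]

theorem blockOperator_mem_unitaryGroup [Fintype n] [Fintype k] [DecidableEq n] [DecidableEq k]
    [CommRing R] [StarRing R] {B : Matrix k k (Matrix n n R)} (hB : star B * B = 1) :
    blockOperator B ∈ unitaryGroup (n × k) R := by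
  rw [mem_unitaryGroup_iff', star_eq_conjTranspose, conjTranspose_blockOperator, blockOperator_mul,
    ← star_eq_conjTranspose, hB, blockOperator_one]

theorem trace_conjTranspose_mul_diagonal_mul [Fintype n] [Fintype k] [DecidableEq k]
    [Semiring R] [StarRing R] (B : Matrix k k (Matrix n n R)) (ρ : Matrix n n R) :
    (Bᴴ * diagonal (fun _ => ρ) * B).trace = ∑ a, ∑ b, (B b a)ᴴ * ρ * B b a := by
  simp [trace, mul_apply, diagonal_apply, star_eq_conjTranspose]

end BlockOperator

theorem hasExactFactorization_of_blocks {d ν : ℕ}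
    (B : Matrix (Fin ν) (Fin ν) (Matrix (Fin d) (Fin d) ℂ)) (hB : star B * B = 1) :
    HasExactFactorization d ν fun ρ => ((1 : ℂ) / ν) • ∑ a, ∑ b, (B b a)ᴴ * ρ * B b a := by
  refine ⟨blockOperator B, blockOperator_mem_unitaryGroup hB, fun ρ i j => ?_⟩
  rw [kronecker_smul_one_eq_blockOperator, conjTranspose_blockOperator, blockOperator_mul,
    blockOperator_mul, sum_blockOperator_apply_diag, trace_conjTranspose_mul_diagonal_mul]
  simp [Matrix.sum_apply, Finset.mul_sum]

theorem conj_mul_add_conj_mul_eq_one {α β : ℂ} (hnorm : ‖α‖ ^ 2 + ‖β‖ ^ 2 = 1) :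
    starRingEnd ℂ α * α + starRingEnd ℂ β * β = 1 := by
  simp only [Complex.conj_mul']
  exact_mod_cast hnorm

theorem conjTranspose_mul_self_A₁_add_A₃ {α β : ℂ} (hnorm : ‖α‖ ^ 2 + ‖β‖ ^ 2 = 1) :
    (A₁ α)ᴴ * A₁ α + (A₃ β)ᴴ * A₃ β = 1 := by
  have h := conj_mul_add_conj_mul_eq_one hnorm
  ext i j
  fin_cases i <;> fin_cases j <;> simp [A₁, A₃, mul_apply, Fin.sum_univ_three, one_apply]
  linear_combination h

theorem conjTranspose_mul_self_A₂_add_A₄ {α β : ℂ} (hnorm : ‖α‖ ^ 2 + ‖β‖ ^ 2 = 1) :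
    (A₂ β)ᴴ * A₂ β + (A₄ α)ᴴ * A₄ α = 1 := by
  have h := conj_mul_add_conj_mul_eq_one hnorm
  ext i j
  fin_cases i <;> fin_cases j <;> simp [A₂, A₄, mul_apply, Fin.sum_univ_three, one_apply]
  linear_combination h

theorem conjTranspose_A₁_mul_A₂_add_conjTranspose_A₃_mul_A₄ (α β : ℂ) :
    (A₁ α)ᴴ * A₂ β + (A₃ β)ᴴ * A₄ α = 0 := by
  ext i j
  fin_cases i <;> fin_cases j <;> simp [A₁, A₂, A₃, A₄, mul_apply, Fin.sum_univ_three]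
  ring

def krausBlocks (α β : ℂ) : Matrix (Fin 2) (Fin 2) (Matrix (Fin 3) (Fin 3) ℂ) :=
  !![A₁ α, A₂ β; A₃ β, A₄ α]

theorem star_krausBlocks_mul_self {α β : ℂ} (hnorm : ‖α‖ ^ 2 + ‖β‖ ^ 2 = 1) :
    star (krausBlocks α β) * krausBlocks α β = 1 := by
  have hcross := conjTranspose_A₁_mul_A₂_add_conjTranspose_A₃_mul_A₄ α β
  have hcross' : (A₂ β)ᴴ * A₁ α + (A₄ α)ᴴ * A₃ β = 0 := by
    simpa [conjTranspose_add, conjTranspose_mul] using congrArg conjTranspose hcross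
  ext a b : 1
  fin_cases a <;> fin_cases b <;> simp [krausBlocks, mul_apply, Fin.sum_univ_two]
  exacts [conjTranspose_mul_self_A₁_add_A₃ hnorm, hcross, hcross',
    conjTranspose_mul_self_A₂_add_A₄ hnorm]

theorem Phi_eq_sum_krausBlocks (α β : ℂ) :
    Phi α β = fun ρ => ((1 : ℂ) / (2 : ℕ)) •
      ∑ a, ∑ b, (krausBlocks α β b a)ᴴ * ρ * krausBlocks α β b a := by
  funext ρ
  simp [Phi, krausBlocks, Fin.sum_univ_two]
  abel

/-- For every `α, β` with `|α|² + |β|² = 1`, the map `Φ_{α,β}` has an exact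
factorization through `M₃(ℂ) ⊗ M₂(ℂ)`. -/
theorem Phi_hasExactFactorization (α β : ℂ) (hnorm : ‖α‖ ^ 2 + ‖β‖ ^ 2 = 1) :
    HasExactFactorization 3 2 (Phi α β) := by
  rw [Phi_eq_sum_krausBlocks]
  exact hasExactFactorization_of_blocks _ (star_krausBlocks_mul_self hnorm)

end
end

section
/- Let d ≥ 3, let t ∈ (−1,1), and let V₁, …, V_d be arbitrary unitary matrices in M_{d−1}(ℂ). Define A_m = S^{−(m−1)} (t ⊕ V_m) S^{m−1} ∈ M_d(ℂ) for m = 1,…,d. Then each A_m is a normal matrix (A_m A_m* = A_m* A_m), the family {A_m* A_m}_{m=1}^d consists of diagonal matrices and is linearly independent over ℂ, and it spans the subspace of all diagonal matrices in M_d(ℂ). -/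
open Matrix

noncomputable section

/-- The cyclic shift matrix `S = ∑_k |e_k⟩⟨e_{k+1}|` (indices mod `d`). -/
def cyclicShift (d : ℕ) : Matrix (Fin d) (Fin d) ℂ :=
  Matrix.of fun j k => if (k : ℕ) = ((j : ℕ) + 1) % d then 1 else 0

/-- The block-diagonal matrix `t ⊕ V ∈ M_d(ℂ)` with `(1,1)` entry `t` and lower-right
`(d−1)×(d−1)` block `V`. -/
def blockTV (d : ℕ) (t : ℂ) (V : Matrix (Fin (d - 1)) (Fin (d - 1)) ℂ) :
    Matrix (Fin d) (Fin d) ℂ :=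
  Matrix.of fun j k =>
    if h : (j : ℕ) = 0 ∨ (k : ℕ) = 0 then
      (if (j : ℕ) = 0 ∧ (k : ℕ) = 0 then t else 0)
    else V ⟨(j : ℕ) - 1, by have := j.isLt; omega⟩ ⟨(k : ℕ) - 1, by have := k.isLt; omega⟩

/-- `A_m = S^{−(m−1)} (t ⊕ V_m) S^{m−1}`, where `m : Fin d` corresponds to the index
`m+1 ∈ {1,…,d}` (so that the exponent is `(m : ℕ)`). Since `S` is unitary,
`S^{−(m−1)} = (S^{m−1})ᴴ`. -/
def keyA (d : ℕ) (t : ℂ) (V : Fin d → Matrix (Fin (d - 1)) (Fin (d - 1)) ℂ) (m : Fin d) :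
    Matrix (Fin d) (Fin d) ℂ :=
  ((cyclicShift d) ^ (m : ℕ))ᴴ * blockTV d t (V m) * (cyclicShift d) ^ (m : ℕ)

/-! Conjugation by the permutation matrix `S^m` relabels indices by `j ↦ j - m`, and for unitary
`V` both `(t ⊕ V)ᴴ (t ⊕ V)` and `(t ⊕ V) (t ⊕ V)ᴴ` equal `t² ⊕ 1`. Hence `A_mᴴ A_m = A_m A_mᴴ` is
the diagonal matrix with `t²` at position `m` and `1` elsewhere. The sum of these `d` diagonals
is `(d + t² - 1) • 1`, so as `t² ≠ 1` their span contains `1` and every diagonal unit `e_m`;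
linear independence then follows by counting dimensions. -/

theorem cyclicShift_eq_permMatrix (d : ℕ) [NeZero d] :
    cyclicShift d = (Equiv.addRight (1 : Fin d)).permMatrix ℂ := by
  ext j k
  simp only [cyclicShift, of_apply, PEquiv.toMatrix_apply, Equiv.toPEquiv_apply, Option.mem_def,
    Option.some_inj, Equiv.coe_addRight, Fin.ext_iff, Fin.val_add, Fin.val_one', Nat.add_mod_mod,
    eq_comm]

open Fin.NatCast in
theorem cyclicShift_pow (d m : ℕ) [NeZero d] :
    cyclicShift d ^ m = (Equiv.addRight (m : Fin d)).permMatrix ℂ := by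
  induction m with
  | zero => simp
  | succ m ih =>
    rw [pow_succ, ih, cyclicShift_eq_permMatrix, ← permMatrix_mul]
    congr
    ext x
    simp [add_assoc]

theorem conjTranspose_permMatrix_mul_mul {n R : Type*} [DecidableEq n] [Fintype n]
    [Semiring R] [StarRing R] (σ : Equiv.Perm n) (B : Matrix n n R) :
    (σ.permMatrix R)ᴴ * B * σ.permMatrix R = B.submatrix σ.symm σ.symm := by
  rw [conjTranspose_permMatrix, PEquiv.toMatrix_toPEquiv_mul, PEquiv.mul_toMatrix_toPEquiv,
    submatrix_submatrix]
  rfl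

open Fin.NatCast in
theorem keyA_eq_submatrix (d : ℕ) [NeZero d] (t : ℂ)
    (V : Fin d → Matrix (Fin (d - 1)) (Fin (d - 1)) ℂ) (m : Fin d) :
    keyA d t V m =
      (blockTV d t (V m)).submatrix (Equiv.addRight m).symm (Equiv.addRight m).symm := by
  rw [keyA, cyclicShift_pow, conjTranspose_permMatrix_mul_mul, Fin.cast_val_eq_self]

section blockTV

variable {e : ℕ} (t : ℂ) (V : Matrix (Fin e) (Fin e) ℂ)

@[simp] theorem blockTV_zero_zero : blockTV (e + 1) t V 0 0 = t := by simp [blockTV]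

@[simp] theorem blockTV_zero_succ (b : Fin e) : blockTV (e + 1) t V 0 b.succ = 0 := by
  simp [blockTV]

@[simp] theorem blockTV_succ_zero (a : Fin e) : blockTV (e + 1) t V a.succ 0 = 0 := by
  simp [blockTV]

@[simp] theorem blockTV_succ_succ (a b : Fin e) : blockTV (e + 1) t V a.succ b.succ = V a b := by
  simp [blockTV]

end blockTV

theorem blockTV_mul (d : ℕ) (a b : ℂ) (V W : Matrix (Fin (d - 1)) (Fin (d - 1)) ℂ) :
    blockTV d a V * blockTV d b W = blockTV d (a * b) (V * W) := by
  obtain _ | e := d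
  · exact Subsingleton.elim _ _
  ext j k
  cases j using Fin.cases <;> cases k using Fin.cases <;> simp [mul_apply, Fin.sum_univ_succ]

theorem blockTV_conjTranspose (d : ℕ) (t : ℂ) (V : Matrix (Fin (d - 1)) (Fin (d - 1)) ℂ) :
    (blockTV d t V)ᴴ = blockTV d (star t) Vᴴ := by
  obtain _ | e := d
  · exact Subsingleton.elim _ _
  ext j k
  cases j using Fin.cases <;> cases k using Fin.cases <;> simp

theorem blockTV_one (d : ℕ) [NeZero d] (s : ℂ) :
    blockTV d s 1 = diagonal (Function.update 1 0 s) := by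
  obtain _ | e := d
  · exact Subsingleton.elim _ _
  ext j k
  cases j using Fin.cases <;> cases k using Fin.cases <;>
    simp [one_apply, diagonal_apply, Fin.succ_ne_zero, (Fin.succ_ne_zero _).symm]

theorem submatrix_blockTV_one (d : ℕ) [NeZero d] (s : ℂ) (m : Fin d) :
    (blockTV d s 1).submatrix (Equiv.addRight m).symm (Equiv.addRight m).symm =
      diagonal (Function.update 1 m s) := by
  rw [blockTV_one, submatrix_diagonal_equiv, Function.update_comp_equiv]
  simp

section keyA

variable (d : ℕ) [NeZero d] (t : ℝ) (V : Fin d → Matrix (Fin (d - 1)) (Fin (d - 1)) ℂ) {m : Fin d}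

theorem conjTranspose_keyA_mul_keyA (hV : V m ∈ unitaryGroup (Fin (d - 1)) ℂ) :
    (keyA d t V m)ᴴ * keyA d t V m = diagonal (Function.update 1 m ((t : ℂ) ^ 2)) := by
  rw [keyA_eq_submatrix, conjTranspose_submatrix, submatrix_mul_equiv, blockTV_conjTranspose,
    blockTV_mul, ← star_eq_conjTranspose, mem_unitaryGroup_iff'.mp hV, Complex.star_def,
    Complex.conj_ofReal, ← sq, submatrix_blockTV_one]

theorem keyA_mul_conjTranspose_keyA (hV : V m ∈ unitaryGroup (Fin (d - 1)) ℂ) :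
    keyA d t V m * (keyA d t V m)ᴴ = diagonal (Function.update 1 m ((t : ℂ) ^ 2)) := by
  rw [keyA_eq_submatrix, conjTranspose_submatrix, submatrix_mul_equiv, blockTV_conjTranspose,
    blockTV_mul, ← star_eq_conjTranspose, mem_unitaryGroup_iff.mp hV, Complex.star_def,
    Complex.conj_ofReal, ← sq, submatrix_blockTV_one]

end keyA

theorem Function.update_one_eq_one_add_single {R ι : Type*} [AddCommGroupWithOne R]
    [DecidableEq ι] (m : ι) (s : R) :
    Function.update (1 : ι → R) m s = 1 + Pi.single m (s - 1) := by
  ext j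
  by_cases h : j = m <;> simp [h]

section updateOne

variable {K ι : Type*} [Field K] [Fintype ι] [DecidableEq ι] {s : K}

theorem span_range_update_one_eq_top (hs : s ≠ 1) (hcard : (Fintype.card ι : K) + (s - 1) ≠ 0) :
    Submodule.span K (Set.range fun m : ι => Function.update (1 : ι → K) m s) = ⊤ := by
  set W := Submodule.span K (Set.range fun m : ι => Function.update (1 : ι → K) m s)
  have hmem (m : ι) : Function.update (1 : ι → K) m s ∈ W := Submodule.subset_span ⟨m, rfl⟩
  have h_one : (1 : ι → K) ∈ W := by
    have hsum : ∑ m, Function.update (1 : ι → K) m s = ((Fintype.card ι : K) + (s - 1)) • 1 := by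
      simp_rw [Function.update_one_eq_one_add_single, Finset.sum_add_distrib,
        Finset.univ_sum_single (fun _ => s - 1)]
      ext
      simp
    have := Submodule.smul_mem W ((Fintype.card ι : K) + (s - 1))⁻¹
      (W.sum_mem (t := Finset.univ) fun m _ => hmem m)
    rwa [hsum, smul_smul, inv_mul_cancel₀ hcard, one_smul] at this
  have h_single (m : ι) : Pi.single m (1 : K) ∈ W := by
    have := Submodule.smul_mem W (s - 1)⁻¹ (W.sub_mem (hmem m) h_one)
    rwa [Function.update_one_eq_one_add_single, add_sub_cancel_left, ← Pi.single_smul',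
      smul_eq_mul, inv_mul_cancel₀ (sub_ne_zero.mpr hs)] at this
  rw [eq_top_iff, ← (Pi.basisFun K ι).span_eq, Submodule.span_le]
  rintro _ ⟨m, rfl⟩
  simpa using h_single m

theorem linearIndependent_update_one (hs : s ≠ 1) (hcard : (Fintype.card ι : K) + (s - 1) ≠ 0) :
    LinearIndependent K fun m : ι => Function.update (1 : ι → K) m s :=
  linearIndependent_of_top_le_span_of_card_eq_finrank (span_range_update_one_eq_top hs hcard).ge
    (Module.finrank_fintype_fun_eq_card K).symm

end updateOne

theorem mem_span_range_diagonal {K n ι : Type*} [Field K] [DecidableEq n] {v : ι → n → K}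
    (hv : Submodule.span K (Set.range v) = ⊤) {M : Matrix n n K} (hM : M.IsDiag) :
    M ∈ Submodule.span K (Set.range fun i => diagonal (v i)) := by
  have h : (Set.range fun i => diagonal (v i)) = diagonalLinearMap n K K '' Set.range v :=
    Set.range_comp (diagonalLinearMap n K K) v
  rw [← hM.diagonal_diag, h, Submodule.span_image, hv]
  exact Submodule.mem_map_of_mem Submodule.mem_top

/-- For `d ≥ 3`, `t ∈ (−1,1)` and arbitrary unitaries `V₁,…,V_d ∈ M_{d−1}(ℂ)`, each
`A_m = S^{−(m−1)}(t ⊕ V_m)S^{m−1}` is normal, the family `{A_m* A_m}` consists of diagonal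
matrices, is linearly independent, and spans the diagonal matrices in `M_d(ℂ)`. -/
theorem keyA_normal_diag_linearIndependent_span (d : ℕ) (hd : 3 ≤ d) (t : ℝ)
    (ht : t ∈ Set.Ioo (-1 : ℝ) 1)
    (V : Fin d → Matrix (Fin (d - 1)) (Fin (d - 1)) ℂ)
    (hV : ∀ m, V m ∈ Matrix.unitaryGroup (Fin (d - 1)) ℂ) :
    (∀ m, keyA d (t : ℂ) V m * (keyA d (t : ℂ) V m)ᴴ
        = (keyA d (t : ℂ) V m)ᴴ * keyA d (t : ℂ) V m) ∧
    (∀ m, ((keyA d (t : ℂ) V m)ᴴ * keyA d (t : ℂ) V m).IsDiag) ∧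
    LinearIndependent ℂ (fun m : Fin d => (keyA d (t : ℂ) V m)ᴴ * keyA d (t : ℂ) V m) ∧
    (∀ M : Matrix (Fin d) (Fin d) ℂ, M.IsDiag →
      M ∈ Submodule.span ℂ
        (Set.range fun m : Fin d => (keyA d (t : ℂ) V m)ᴴ * keyA d (t : ℂ) V m)) := by
  have : NeZero d := ⟨by omega⟩
  have ht2 : t ^ 2 < 1 := by nlinarith [ht.1, ht.2]
  have hs : (t : ℂ) ^ 2 ≠ 1 := by exact_mod_cast ht2.ne
  have hcard : (Fintype.card (Fin d) : ℂ) + ((t : ℂ) ^ 2 - 1) ≠ 0 := by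
    have : (3 : ℝ) ≤ d := by exact_mod_cast hd
    rw [Fintype.card_fin]
    exact_mod_cast (by nlinarith [sq_nonneg t] : (0 : ℝ) < d + (t ^ 2 - 1)).ne'
  have hAA : (fun m => (keyA d (t : ℂ) V m)ᴴ * keyA d (t : ℂ) V m) =
      fun m => diagonal (Function.update 1 m ((t : ℂ) ^ 2)) :=
    funext fun m => conjTranspose_keyA_mul_keyA d t V (hV m)
  refine ⟨fun m => ?_, fun m => ?_, ?_, fun M hM => ?_⟩
  · rw [keyA_mul_conjTranspose_keyA d t V (hV m), conjTranspose_keyA_mul_keyA d t V (hV m)]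
  · rw [conjTranspose_keyA_mul_keyA d t V (hV m)]
    exact isDiag_diagonal _
  · rw [hAA]
    exact (linearIndependent_update_one hs hcard).map' (diagonalLinearMap (Fin d) ℂ ℂ)
      (LinearMap.ker_eq_bot_of_injective diagonal_injective)
  · rw [hAA]
    exact mem_span_range_diagonal (span_range_update_one_eq_top hs hcard) hM

end
end

section
/- Let d ≥ 3 and let V₁, …, V_d be unitary matrices in M_{d−1}(ℂ) each of band width β(V_m) < (d−1)/4. Then for every t ∈ [−1,1], the family {A_m* A_n}_{m,n=1}^d of matrices A_m = S^{−(m−1)}(t ⊕ V_m)S^{m−1} ∈ M_d(ℂ) is NOT linearly independent over ℂ. -/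
/-!
After conjugation by the cyclic shift, `A_m` is supported in the cyclic band
`{(j, k) : |j - k|_d ≤ β(V_m)}`, where `|·|_d` is the distance on `ℤ/dℤ`; a product of two such
matrices is supported in the band of width `β(V_m) + β(V_n) < d/2`. Hence every `A_m* A_n`
vanishes at the entry `(0, ⌊d/2⌋)`, so all `d²` of them lie in a hyperplane of `M_d(ℂ)` and
cannot be linearly independent.
-/

open Matrix

noncomputable section

/-- The band width `β(B) = max{|j−k| : b_{jk} ≠ 0}` of a matrix (with `β = 0` for the
zero matrix). -/
def bandWidth {n : ℕ} (B : Matrix (Fin n) (Fin n) ℂ) : ℕ :=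
  sSup {r : ℕ | ∃ j k : Fin n, B j k ≠ 0 ∧ r = Nat.dist (j : ℕ) (k : ℕ)}

namespace Matrix

theorem not_linearIndependent_of_forall_apply_eq_zero {ι m n K : Type*} [Fintype ι] [Fintype m]
    [Fintype n] [Field K] {f : ι → Matrix m n K}
    (hcard : Fintype.card m * Fintype.card n ≤ Fintype.card ι) {i : m} {j : n}
    (hf : ∀ p, f p i j = 0) : ¬ LinearIndependent K f := by
  intro hli
  set E := LinearMap.ker (entryLinearMap K K i j)
  have hspan : Submodule.span K (Set.range f) ≤ E :=
    Submodule.span_le.mpr (Set.range_subset_iff.mpr hf)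
  have hE : E ≠ ⊤ := fun h => one_ne_zero <|
    LinearMap.mem_ker.mp (h ▸ Submodule.mem_top : Matrix.of (fun _ _ => (1 : K)) ∈ E)
  have := (Submodule.finrank_mono hspan).trans_lt (Submodule.finrank_lt hE)
  rw [finrank_span_eq_card hli, Module.finrank_matrix, Module.finrank_self, mul_one] at this
  omega

end Matrix

theorem ZMod.natAbs_valMinAbs_natCast_sub_le_dist {d : ℕ} [NeZero d] (a b : ℕ) :
    ((a - b : ZMod d)).valMinAbs.natAbs ≤ Nat.dist a b := by
  have := ZMod.natAbs_min_of_le_div_two d ((a - b : ZMod d)).valMinAbs ((a : ℤ) - b) (by simp)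
    (ZMod.natAbs_valMinAbs_le _)
  simp only [Nat.dist]
  omega

theorem Fin.natCast_val_sub {d : ℕ} [NeZero d] (a b : Fin d) :
    (((a - b : Fin d) : ℕ) : ZMod d) = (a : ℕ) - (b : ℕ) := by
  rw [Fin.val_sub, ZMod.natCast_mod, Nat.cast_add, Nat.cast_sub b.is_lt.le, ZMod.natCast_self]
  ring

/-- `(j - k).valMinAbs.natAbs` is the distance from `j` to `k` on the cycle `ℤ/dℤ`. -/
def IsCyclicBanded {R : Type*} [Zero R] {d : ℕ} (B : Matrix (Fin d) (Fin d) R) (r : ℕ) : Prop :=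
  ∀ j k, B j k ≠ 0 → (((j : ℕ) : ZMod d) - (k : ℕ)).valMinAbs.natAbs ≤ r

namespace IsCyclicBanded

variable {R : Type*} {d : ℕ} {r s : ℕ}

theorem apply_eq_zero [Zero R] {B : Matrix (Fin d) (Fin d) R} (hB : IsCyclicBanded B r)
    {j k : Fin d} (hjk : r < (((j : ℕ) : ZMod d) - (k : ℕ)).valMinAbs.natAbs) : B j k = 0 :=
  by_contra fun hne => (hB j k hne).not_gt hjk

theorem conjTranspose [AddMonoid R] [StarAddMonoid R] {B : Matrix (Fin d) (Fin d) R}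
    (hB : IsCyclicBanded B r) : IsCyclicBanded Bᴴ r := by
  intro j k hjk
  rw [← ZMod.natAbs_valMinAbs_neg, neg_sub]
  exact hB k j (star_ne_zero.mp hjk)

theorem mul [NonUnitalNonAssocSemiring R] {B C : Matrix (Fin d) (Fin d) R}
    (hB : IsCyclicBanded B r) (hC : IsCyclicBanded C s) : IsCyclicBanded (B * C) (r + s) := by
  intro j k hjk
  rw [mul_apply] at hjk
  obtain ⟨l, -, hl⟩ := Finset.exists_ne_zero_of_sum_ne_zero hjk
  rw [← sub_add_sub_cancel _ ((l : ℕ) : ZMod d)]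
  calc _ ≤ (_ + _ : ℤ).natAbs := ZMod.natAbs_valMinAbs_add_le _ _
    _ ≤ _ := Int.natAbs_add_le _ _
    _ ≤ r + s := add_le_add (hB j l (left_ne_zero_of_mul hl)) (hC l k (right_ne_zero_of_mul hl))

theorem submatrix_sub [Zero R] [NeZero d] {B : Matrix (Fin d) (Fin d) R}
    (hB : IsCyclicBanded B r) (m : Fin d) : IsCyclicBanded (B.submatrix (· - m) (· - m)) r := by
  intro j k hjk
  have := hB _ _ hjk
  rwa [Fin.natCast_val_sub, Fin.natCast_val_sub, sub_sub_sub_cancel_right] at this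

end IsCyclicBanded

section CyclicShift

variable {d : ℕ} [NeZero d]

theorem cyclicShift_apply (j k : Fin d) : cyclicShift d j k = if k = j + 1 then 1 else 0 := by
  simp [cyclicShift, Fin.ext_iff, Fin.val_add]

theorem cyclicShift_pow_apply (p : ℕ) (j k : Fin d) :
    (cyclicShift d ^ p) j k = if k = j + Fin.ofNat d p then 1 else 0 := by
  induction p generalizing k with
  | zero => simp [one_apply, eq_comm]
  | succ p ih =>
    have hsucc : Fin.ofNat d (p + 1) = Fin.ofNat d p + 1 := by
      ext; simp [Fin.val_add]
    simp only [pow_succ, mul_apply, ih, cyclicShift_apply, ite_mul, one_mul, zero_mul,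
      Finset.sum_ite_eq', Finset.mem_univ, if_true, hsucc, add_assoc]

theorem conjTranspose_cyclicShift_pow_mul_mul (p : ℕ) (B : Matrix (Fin d) (Fin d) ℂ) :
    (cyclicShift d ^ p)ᴴ * B * cyclicShift d ^ p =
      B.submatrix (· - Fin.ofNat d p) (· - Fin.ofNat d p) := by
  ext j k
  have hS (a b : Fin d) :
      (cyclicShift d ^ p)ᴴ a b = if a = b + Fin.ofNat d p then 1 else 0 := by
    rw [conjTranspose_apply, cyclicShift_pow_apply]
    split_ifs <;> simp_all
  simp only [mul_apply, hS, cyclicShift_pow_apply, ← sub_eq_iff_eq_add, ite_mul, mul_ite, one_mul,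
    zero_mul, mul_one, mul_zero, Finset.sum_ite_eq, Finset.mem_univ, if_true, submatrix_apply]

end CyclicShift

theorem dist_le_bandWidth {n : ℕ} {B : Matrix (Fin n) (Fin n) ℂ} {j k : Fin n}
    (h : B j k ≠ 0) : Nat.dist (j : ℕ) (k : ℕ) ≤ bandWidth B := by
  refine le_csSup ⟨n, ?_⟩ ⟨j, k, h, rfl⟩
  rintro _ ⟨j', k', -, rfl⟩
  have := j'.isLt
  have := k'.isLt
  simp only [Nat.dist]
  omega

theorem dist_le_bandWidth_of_blockTV_apply_ne_zero {d : ℕ} {t : ℂ}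
    {V : Matrix (Fin (d - 1)) (Fin (d - 1)) ℂ} {a b : Fin d} (h : blockTV d t V a b ≠ 0) :
    Nat.dist (a : ℕ) (b : ℕ) ≤ bandWidth V := by
  simp only [blockTV, Matrix.of_apply] at h
  split_ifs at h with _ hzero
  · simp [hzero.1, hzero.2]
  · exact absurd rfl h
  · have := dist_le_bandWidth h
    simp only [Nat.dist] at this ⊢
    omega

theorem isCyclicBanded_blockTV {d : ℕ} [NeZero d] (t : ℂ)
    (V : Matrix (Fin (d - 1)) (Fin (d - 1)) ℂ) : IsCyclicBanded (blockTV d t V) (bandWidth V) :=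
  fun _ _ h => (ZMod.natAbs_valMinAbs_natCast_sub_le_dist _ _).trans
    (dist_le_bandWidth_of_blockTV_apply_ne_zero h)

theorem isCyclicBanded_keyA {d : ℕ} [NeZero d] (t : ℂ)
    (V : Fin d → Matrix (Fin (d - 1)) (Fin (d - 1)) ℂ) (m : Fin d) :
    IsCyclicBanded (keyA d t V m) (bandWidth (V m)) := by
  rw [keyA, conjTranspose_cyclicShift_pow_mul_mul, Fin.ofNat_val_eq_self]
  exact (isCyclicBanded_blockTV t (V m)).submatrix_sub m

theorem bandWidth_small_not_linearIndependent_general (d : ℕ) (hd : 3 ≤ d)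
    (V : Fin d → Matrix (Fin (d - 1)) (Fin (d - 1)) ℂ)
    (hband : ∀ m, (bandWidth (V m) : ℝ) < ((d : ℝ) - 1) / 4) :
    ∀ t ∈ Set.Icc (-1 : ℝ) 1,
      ¬ LinearIndependent ℂ
        (fun p : Fin d × Fin d => (keyA d (t : ℂ) V p.1)ᴴ * keyA d (t : ℂ) V p.2) := by
  intro t _
  have : NeZero d := ⟨by omega⟩
  have hβ : ∀ m, 4 * bandWidth (V m) + 1 < d := fun m => by
    exact_mod_cast (by linarith [hband m] : (4 * bandWidth (V m) + 1 : ℝ) < d)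
  have hfar : (((0 : Fin d) : ℕ) - ((d / 2 : ℕ) : ZMod d)).valMinAbs.natAbs = d / 2 := by
    rw [Fin.val_zero, Nat.cast_zero, zero_sub, ZMod.natAbs_valMinAbs_neg,
      ZMod.valMinAbs_natCast_of_le_half le_rfl, Int.natAbs_natCast]
  refine Matrix.not_linearIndependent_of_forall_apply_eq_zero (i := 0) (j := ⟨d / 2, by omega⟩)
    (by simp) fun p => ?_
  have hprod := (isCyclicBanded_keyA (t : ℂ) V p.1).conjTranspose.mul
    (isCyclicBanded_keyA (t : ℂ) V p.2)
  refine hprod.apply_eq_zero ?_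
  rw [hfar]
  have := hβ p.1
  have := hβ p.2
  omega

/-- If `V₁,…,V_d` are unitaries in `M_{d−1}(ℂ)` with band width `β(V_m) < (d−1)/4`, then
for every `t ∈ [−1,1]` the family `{A_m* A_n}` is not linearly independent. -/
theorem bandWidth_small_not_linearIndependent (d : ℕ) (hd : 3 ≤ d)
    (V : Fin d → Matrix (Fin (d - 1)) (Fin (d - 1)) ℂ)
    (hV : ∀ m, V m ∈ Matrix.unitaryGroup (Fin (d - 1)) ℂ)
    (hband : ∀ m, (bandWidth (V m) : ℝ) < ((d : ℝ) - 1) / 4) :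
    ∀ t ∈ Set.Icc (-1 : ℝ) 1,
      ¬ LinearIndependent ℂ
        (fun p : Fin d × Fin d => (keyA d (t : ℂ) V p.1)ᴴ * keyA d (t : ℂ) V p.2) :=
  bandWidth_small_not_linearIndependent_general d hd V hband

end
end

section
/- Let d ≥ 3 and ε ∈ {+1, −1}. For real x and indices 1 ≤ m < n ≤ d define the matrix X^ε_{mn}(x) ∈ M_d(ℂ) with entries: x at position (m,n); εx at (n,m); 1 at positions (m,j) and (j,n) for every j ∉ {m,n}; ε at positions (j,m) and (n,j) for every j ∉ {m,n}; and 0 elsewhere. Let Ω^ε_d(0) be the matrix indexed by the set P = {(m,n) : 1 ≤ m < n ≤ d} whose entry in row (m,n) and column (j,k) equals: 0 if (j,k) = (m,n); 1 if j = m and k ≠ n; ε if k = m; 1 if k = n and j ≠ m; ε if j = n; and 0 otherwise. Then for every w ∈ ℝ, the family {X^ε_{mn}(w)}_{1 ≤ m < n ≤ d} is linearly independent over ℂ if and only if −w is not an eigenvalue of Ω^ε_d(0). -/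
open Matrix

noncomputable section

/-- The matrix `X^ε_{mn}(x) ∈ M_d(ℂ)`: entry `x` at `(m,n)`, `εx` at `(n,m)`, `1` at
`(m,j)` and `(j,n)` for `j ∉ {m,n}`, `ε` at `(j,m)` and `(n,j)` for `j ∉ {m,n}`, `0`
elsewhere. -/
def Xmat (d : ℕ) (ε : ℝ) (x : ℝ) (m n : Fin d) : Matrix (Fin d) (Fin d) ℂ :=
  Matrix.of fun j k =>
    if j = m ∧ k = n then (x : ℂ)
    else if j = n ∧ k = m then ((ε * x : ℝ) : ℂ)
    else if (j = m ∧ k ≠ n ∧ k ≠ m) ∨ (k = n ∧ j ≠ m ∧ j ≠ n) then 1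
    else if (k = m ∧ j ≠ n ∧ j ≠ m) ∨ (j = n ∧ k ≠ m ∧ k ≠ n) then (ε : ℂ)
    else 0

/-- The index set `P = {(m,n) : 1 ≤ m < n ≤ d}`. -/
abbrev PairIdx (d : ℕ) := {p : Fin d × Fin d // p.1 < p.2}

/-- The matrix `Ω^ε_d(0)`, indexed by `P = {(m,n) : m < n}`: its entry in row `(m,n)`
and column `(j,k)` is `0` if `(j,k) = (m,n)`; `1` if `j = m` and `k ≠ n`; `ε` if
`k = m`; `1` if `k = n` and `j ≠ m`; `ε` if `j = n`; and `0` otherwise. -/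
def Omega (d : ℕ) (ε : ℝ) : Matrix (PairIdx d) (PairIdx d) ℂ :=
  Matrix.of fun r c =>
    if c.1.1 = r.1.1 ∧ c.1.2 = r.1.2 then 0
    else if c.1.1 = r.1.1 ∧ c.1.2 ≠ r.1.2 then 1
    else if c.1.2 = r.1.1 then (ε : ℂ)
    else if c.1.2 = r.1.2 ∧ c.1.1 ≠ r.1.1 then 1
    else if c.1.1 = r.1.2 then (ε : ℂ)
    else 0

/-! For coefficients `g` on `P`, the strictly upper triangular entries of `∑ₚ gₚ X^ε_p(w)`
are the coordinates of `(Ω^ε_d(0) + w) g`; its diagonal vanishes and, since `ε² = 1`, its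
lower triangle is `ε` times the transposed upper one. So the combination vanishes exactly when
`g` lies in the kernel of `Ω^ε_d(0) + w`, and the family is independent iff that kernel is
trivial, i.e. iff `det (Ω^ε_d(0) + w) ≠ 0`. -/

theorem Matrix.eq_zero_of_apply_of_lt {ι R : Type*} [LinearOrder ι] [MulZeroClass R]
    {A : Matrix ι ι R} (c : R) (hswap : ∀ a b, a < b → A b a = c * A a b)
    (hdiag : ∀ a, A a a = 0) (hupper : ∀ a b, a < b → A a b = 0) : A = 0 := by
  ext a b
  rcases lt_trichotomy a b with hab | rfl | hba
  · exact hupper a b hab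
  · exact hdiag a
  · rw [hswap b a hba, hupper b a hba, mul_zero, zero_apply]

section Xmat

variable {d : ℕ} {ε : ℝ}

theorem Xmat_apply_pairIdx (w : ℝ) (q p : PairIdx d) :
    Xmat d ε w p.1.1 p.1.2 q.1.1 q.1.2 = (Omega d ε + (w : ℂ) • 1) q p := by
  obtain ⟨⟨a, b⟩, hab⟩ := q
  obtain ⟨⟨m, n⟩, hmn⟩ := p
  simp only [Xmat, Omega, Matrix.add_apply, Matrix.smul_apply, one_apply, of_apply,
    Subtype.mk.injEq, Prod.mk.injEq, smul_eq_mul]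
  split_ifs <;> simp only [Fin.ext_iff, ne_eq, Fin.lt_def, not_and_or, not_or] at * <;>
    first | omega | ring

theorem Xmat_apply_swap (hε : ε * ε = 1) (w : ℝ) {m n : Fin d} (hmn : m < n)
    {a b : Fin d} (hab : a < b) : Xmat d ε w m n b a = ε * Xmat d ε w m n a b := by
  have hεℂ : (ε : ℂ) * ε = 1 := by exact_mod_cast hε
  simp only [Xmat, of_apply]
  split_ifs <;> simp only [Fin.ext_iff, ne_eq, Fin.lt_def, not_and_or, not_or] at * <;>
    first | omega | (push_cast; ring1) | linear_combination -hεℂ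

theorem Xmat_apply_self (w : ℝ) {m n : Fin d} (hmn : m < n) (j : Fin d) :
    Xmat d ε w m n j j = 0 := by
  simp only [Xmat, of_apply]
  split_ifs <;> simp only [Fin.ext_iff, ne_eq, Fin.lt_def, not_and_or, not_or] at * <;> omega

theorem sum_smul_Xmat_apply_pairIdx (w : ℝ) (g : PairIdx d → ℂ) (q : PairIdx d) :
    (∑ p, g p • Xmat d ε w p.1.1 p.1.2) q.1.1 q.1.2 =
      ((Omega d ε + (w : ℂ) • 1) *ᵥ g) q := by
  simp only [Matrix.sum_apply, Matrix.smul_apply, smul_eq_mul, Xmat_apply_pairIdx, mulVec,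
    dotProduct, mul_comm]

theorem sum_smul_Xmat_eq_zero_iff (hε : ε * ε = 1) (w : ℝ) (g : PairIdx d → ℂ) :
    ∑ p, g p • Xmat d ε w p.1.1 p.1.2 = 0 ↔ (Omega d ε + (w : ℂ) • 1) *ᵥ g = 0 := by
  constructor
  · intro h
    funext q
    rw [← sum_smul_Xmat_apply_pairIdx, h, Matrix.zero_apply, Pi.zero_apply]
  · intro h
    refine eq_zero_of_apply_of_lt (ε : ℂ) (fun a b hab => ?_) (fun j => ?_) (fun a b hab => ?_)
    · rw [Matrix.sum_apply, Matrix.sum_apply, Finset.mul_sum]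
      refine Finset.sum_congr rfl fun p _ => ?_
      rw [Matrix.smul_apply, Matrix.smul_apply, Xmat_apply_swap hε w p.2 hab, smul_eq_mul,
        smul_eq_mul, mul_left_comm]
    · rw [Matrix.sum_apply]
      exact Finset.sum_eq_zero fun p _ => by
        rw [Matrix.smul_apply, Xmat_apply_self w p.2, smul_zero]
    · rw [sum_smul_Xmat_apply_pairIdx w g ⟨(a, b), hab⟩, h, Pi.zero_apply]

end Xmat

theorem Xmat_linearIndependent_iff_not_eigenvalue_general (d : ℕ) (ε : ℝ)
    (hε : ε = 1 ∨ ε = -1) (w : ℝ) :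
    LinearIndependent ℂ (fun p : PairIdx d => Xmat d ε w p.1.1 p.1.2) ↔
      Matrix.det (Omega d ε - ((-w : ℝ) : ℂ) • (1 : Matrix (PairIdx d) (PairIdx d) ℂ))
        ≠ 0 := by
  have hεε : ε * ε = 1 := by rcases hε with rfl | rfl <;> norm_num
  have hM : Omega d ε - ((-w : ℝ) : ℂ) • 1 = Omega d ε + (w : ℂ) • 1 := by
    rw [Complex.ofReal_neg, neg_smul, sub_neg_eq_add]
  rw [hM, Ne, ← exists_mulVec_eq_zero_iff, Fintype.linearIndependent_iff]
  simp only [sum_smul_Xmat_eq_zero_iff hεε]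
  refine ⟨fun h ⟨g, hg, hMg⟩ => hg (funext (h g hMg)), fun h g hMg p => ?_⟩
  by_contra hgp
  exact h ⟨g, fun hg => hgp (congrFun hg p), hMg⟩

/-- For `d ≥ 3`, `ε ∈ {1,−1}` and any `w ∈ ℝ`: the family `{X^ε_{mn}(w)}_{m<n}` is
linearly independent over `ℂ` iff `−w` is not an eigenvalue of `Ω^ε_d(0)`. -/
theorem Xmat_linearIndependent_iff_not_eigenvalue (d : ℕ) (hd : 3 ≤ d) (ε : ℝ)
    (hε : ε = 1 ∨ ε = -1) (w : ℝ) :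
    LinearIndependent ℂ (fun p : PairIdx d => Xmat d ε w p.1.1 p.1.2) ↔
      Matrix.det (Omega d ε - ((-w : ℝ) : ℂ) • (1 : Matrix (PairIdx d) (PairIdx d) ℂ))
        ≠ 0 :=
  Xmat_linearIndependent_iff_not_eigenvalue_general d ε hε w

end
end

section
/- Let d ≥ 3 and let Ω⁺_d(0) be the d(d−1)/2 × d(d−1)/2 matrix indexed by P = {(m,n) : 1 ≤ m < n ≤ d} whose entry in row (m,n) and column (j,k) equals: 0 if (j,k) = (m,n); 1 if j = m and k ≠ n; 1 if k = m; 1 if k = n and j ≠ m; 1 if j = n; and 0 otherwise. Then the characteristic polynomial of Ω⁺_d(0) is (X − 2(d−2)) · (X − (d−4))^{d−1} · (X + 2)^{d(d−3)/2}; i.e., Ω⁺_d(0) has the non-degenerate eigenvalue 2(d−2), eigenvalue d−4 with algebraic multiplicity d−1, and eigenvalue −2 with algebraic multiplicity d(d−3)/2. -/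
open Matrix Polynomial

noncomputable section

/-- The matrix `Ω⁺_d(0)`, indexed by `P = {(m,n) : m < n}`: its entry in row `(m,n)` and
column `(j,k)` is `0` if `(j,k) = (m,n)`; `1` if `j = m` and `k ≠ n`; `1` if `k = m`;
`1` if `k = n` and `j ≠ m`; `1` if `j = n`; and `0` otherwise. -/
def OmegaPlus (d : ℕ) : Matrix (PairIdx d) (PairIdx d) ℂ :=
  Matrix.of fun r c =>
    if c.1.1 = r.1.1 ∧ c.1.2 = r.1.2 then 0
    else if c.1.1 = r.1.1 ∧ c.1.2 ≠ r.1.2 then 1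
    else if c.1.2 = r.1.1 then 1
    else if c.1.2 = r.1.2 ∧ c.1.1 ≠ r.1.1 then 1
    else if c.1.1 = r.1.2 then 1
    else 0

/-!
`Ω⁺_d(0) = KᵀK - 2` for the vertex–edge incidence matrix `K` of the complete graph on `d`
vertices. On the vertex side `KKᵀ = (d - 2) + J` with `J` the all-ones matrix, whose
characteristic polynomial is `(X - 2(d - 1)) (X - (d - 2))^(d - 1)`. Since `KᵀK` and `KKᵀ` share
their characteristic polynomial up to a power of `X`, the remaining `d(d - 3)/2` eigenvalues of
`KᵀK` vanish, and the shift by `-2` gives the result.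
-/

theorem charpoly_add_scalar {R n : Type*} [CommRing R] [Fintype n] [DecidableEq n]
    (M : Matrix n n R) (μ : R) : (M + scalar n μ).charpoly = M.charpoly.comp (X - C μ) := by
  simpa [sub_eq_add_neg] using charpoly_sub_scalar M (-μ)

theorem Nat.choose_two_eq_mul_sub_three_div_two_add {n : ℕ} (hn : 3 ≤ n) :
    n.choose 2 = n * (n - 3) / 2 + n := by
  obtain ⟨m, rfl⟩ := Nat.exists_eq_add_of_le' hn
  have h : (m + 3) * (m + 3 - 1) = (m + 3) * (m + 3 - 3) + (m + 3) * 2 := by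
    rw [show m + 3 - 1 = m + 2 by omega, Nat.add_sub_cancel]
    ring
  rw [Nat.choose_two_right, h, Nat.add_mul_div_right _ _ two_pos]

section PairIncidence

variable {α : Type*} [Fintype α] [LinearOrder α] {R : Type*} [CommRing R]

theorem card_lt_pairs : Fintype.card {p : α × α // p.1 < p.2} = (Fintype.card α).choose 2 := by
  rw [Fintype.card_subtype, Fintype.card_product_filter_lt]

theorem sum_lt_pairs_eq_sum_ite {M : Type*} [AddCommMonoid M] (g : α → α → M) :
    ∑ p : {p : α × α // p.1 < p.2}, g p.1.1 p.1.2 = ∑ a, ∑ b, if a < b then g a b else 0 := by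
  rw [← Fintype.sum_prod_type', ← Finset.sum_filter, Finset.sum_subtype
    (p := fun q : α × α => q.1 < q.2) _ (fun q => by simp) (fun q : α × α => g q.1 q.2)]

theorem sum_lt_pairs_add_swap {M : Type*} [AddCommGroup M] (f : α → α → M) :
    ∑ p : {p : α × α // p.1 < p.2}, (f p.1.1 p.1.2 + f p.1.2 p.1.1) =
      ∑ a, ∑ b, f a b - ∑ a, f a a := by
  have hsplit (a b : α) : f a b =
      ((if a < b then f a b else 0) + if b < a then f a b else 0) + if a = b then f a b else 0 := by
    rcases lt_trichotomy a b with h | h | h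
    · simp [h, h.not_gt, h.ne]
    · simp [h]
    · simp [h, h.not_gt, h.ne']
  rw [eq_sub_iff_add_eq, sum_lt_pairs_eq_sum_ite (fun a b => f a b + f b a)]
  conv_rhs => enter [2, a, 2, b]; rw [hsplit a b]
  simp only [Finset.sum_add_distrib]
  rw [Finset.sum_comm (f := fun a b => if b < a then f a b else 0)]
  simp [ite_add_zero, Finset.sum_add_distrib]

variable (α R) in
/-- The vertex–edge incidence matrix of the complete graph on `α`, an edge being an increasing
pair of vertices. -/
def pairIncidence : Matrix α {p : α × α // p.1 < p.2} R :=
  of fun x p => (if x = p.1.1 then 1 else 0) + (if x = p.1.2 then 1 else 0)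

theorem transpose_pairIncidence_mul_apply (p q : {p : α × α // p.1 < p.2}) :
    ((pairIncidence α R)ᵀ * pairIncidence α R) p q =
      (if p.1.1 = q.1.1 then 1 else 0) + (if p.1.1 = q.1.2 then 1 else 0) +
        (if p.1.2 = q.1.1 then 1 else 0) + (if p.1.2 = q.1.2 then 1 else 0) := by
  simp only [pairIncidence, mul_apply, transpose_apply, of_apply, add_mul, mul_add, ite_mul,
    one_mul, zero_mul, Finset.sum_add_distrib, Finset.sum_ite_eq', Finset.mem_univ, if_true]
  abel

theorem pairIncidence_mul_transpose :
    pairIncidence α R * (pairIncidence α R)ᵀ =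
      vecMulVec 1 1 + scalar α ((Fintype.card α : R) - 2) := by
  ext x y
  let δ : α → α → R := fun a b => if a = b then 1 else 0
  have hF := sum_lt_pairs_add_swap fun a b => δ x a * δ y b
  have hG := sum_lt_pairs_add_swap fun a b => δ x a * δ y a
  calc _ = ∑ p : {p : α × α // p.1 < p.2},
        ((δ x p.1.1 * δ y p.1.2 + δ x p.1.2 * δ y p.1.1) +
          (δ x p.1.1 * δ y p.1.1 + δ x p.1.2 * δ y p.1.2)) := by
        simp only [pairIncidence, mul_apply, transpose_apply, of_apply, δ]
        congr! 1 with p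
        ring
    _ = _ := by
      rw [Finset.sum_add_distrib, hF, hG]
      by_cases h : x = y
      · simp [δ, h]
        ring
      · simp [δ, h]

theorem charpoly_pairIncidence_mul_transpose [Nonempty α] :
    (pairIncidence α R * (pairIncidence α R)ᵀ).charpoly =
      (X - C (2 * ((Fintype.card α : R) - 1))) *
        (X - C ((Fintype.card α : R) - 2)) ^ (Fintype.card α - 1) := by
  rw [pairIncidence_mul_transpose, charpoly_add_scalar, charpoly_vecMulVec]
  obtain ⟨m, hm⟩ := Nat.exists_eq_add_of_le' (Fintype.card_pos (α := α))
  simp only [dotProduct_one, Pi.one_apply, Finset.sum_const, Finset.card_univ, nsmul_eq_mul,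
    mul_one, hm]
  simp [pow_succ, sub_comp, smul_eq_C_mul, C_ofNat]
  ring

theorem charpoly_transpose_pairIncidence_mul (hα : 3 ≤ Fintype.card α) :
    ((pairIncidence α R)ᵀ * pairIncidence α R).charpoly =
      X ^ (Fintype.card α * (Fintype.card α - 3) / 2) *
        ((X - C (2 * ((Fintype.card α : R) - 1))) *
          (X - C ((Fintype.card α : R) - 2)) ^ (Fintype.card α - 1)) := by
  have : Nonempty α := Fintype.card_pos_iff.mp (by omega)
  have hcard := card_lt_pairs.trans (Nat.choose_two_eq_mul_sub_three_div_two_add hα)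
  rw [charpoly_mul_comm_of_le _ _ (by omega), hcard, Nat.add_sub_cancel,
    charpoly_pairIncidence_mul_transpose]

end PairIncidence

theorem OmegaPlus_eq_transpose_pairIncidence_mul_sub (d : ℕ) :
    OmegaPlus d = (pairIncidence (Fin d) ℂ)ᵀ * pairIncidence (Fin d) ℂ - scalar _ 2 := by
  ext ⟨⟨m, n⟩, hmn⟩ ⟨⟨j, k⟩, hjk⟩
  rw [Matrix.sub_apply, transpose_pairIncidence_mul_apply, scalar_apply, diagonal_apply]
  simp only [OmegaPlus, of_apply, Subtype.ext_iff, Prod.ext_iff, Fin.ext_iff]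
  have : (m : ℕ) < n := hmn
  have : (j : ℕ) < k := hjk
  split_ifs <;> norm_num <;> omega

/-- For `d ≥ 3`, the characteristic polynomial of `Ω⁺_d(0)` is
`(X − 2(d−2)) (X − (d−4))^{d−1} (X + 2)^{d(d−3)/2}`. -/
theorem charpoly_OmegaPlus (d : ℕ) (hd : 3 ≤ d) :
    (OmegaPlus d).charpoly =
      (X - C (2 * ((d : ℂ) - 2))) * (X - C ((d : ℂ) - 4)) ^ (d - 1) *
        (X + C 2) ^ (d * (d - 3) / 2) := by
  have h := charpoly_transpose_pairIncidence_mul (α := Fin d) (R := ℂ) (by simpa using hd)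
  rw [Fintype.card_fin] at h
  rw [OmegaPlus_eq_transpose_pairIncidence_mul_sub, charpoly_sub_scalar, h]
  simp only [mul_comp, pow_comp, sub_comp, X_comp, C_comp]
  simp only [map_sub, map_mul, map_natCast, map_one, map_ofNat]
  ring

end
end
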